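/- Let (t,m) ∈ [0,T] × 𝒫₂ and M ∈ 𝓜(t,m). Then for every t' ∈ [t,T] and every bounded continuous function φ on ℝ^d, E[M_{t'}(φ)] = p^{t,m}_{t'}(φ); this identity extends to all measurable functions φ with at most quadratic growth, and in particular M_{t'} belongs to 𝒫₂ almost surely. -/

import Mathlib

open MeasureTheory Filter Set
open scoped Topology ENNReal NNReal BoundedContinuousFunction

noncomputable section

/-- Euclidean space `ℝ^d`. -/
abbrev Ed (d : ℕ) : Type := EuclideanSpace ℝ (Fin d)

/-- `m ∈ 𝒫_p` : Borel probability measure on `ℝ^d` with finite `p`-th moment. -/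
def MemP (d : ℕ) (p : ℝ) (m : Measure (Ed d)) : Prop :=
  IsProbabilityMeasure m ∧ Integrable (fun x => ‖x‖ ^ p) m

/-- `γ` is a coupling of `m` and `m'`. -/
def IsCoupling (d : ℕ) (γ : Measure (Ed d × Ed d)) (m m' : Measure (Ed d)) : Prop :=
  γ.map Prod.fst = m ∧ γ.map Prod.snd = m'

/-- The `p`-Wasserstein distance. -/
def wdist (d : ℕ) (p : ℝ) (m m' : Measure (Ed d)) : ℝ :=
  sInf { c : ℝ | ∃ γ : Measure (Ed d × Ed d), IsProbabilityMeasure γ ∧ IsCoupling d γ m m' ∧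
      c = (∫ q, ‖q.1 - q.2‖ ^ p ∂γ) ^ (1 / p) }

/-- The Gaussian kernel `ρ_δ`. -/
def gaussDensity (d : ℕ) (δ : ℝ) (x : Ed d) : ℝ :=
  (2 * Real.pi * δ) ^ (-(d : ℝ) / 2) * Real.exp (-‖x‖ ^ 2 / (2 * δ))

/-- The centered Gaussian measure with variance `δ` on `ℝ^d`. -/
def gaussMeasure (d : ℕ) (δ : ℝ) : Measure (Ed d) :=
  volume.withDensity fun x => ENNReal.ofReal (gaussDensity d δ x)

/-- The heat flow `p^{t,m}_s` : the law at time `s` of a Brownian motion started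
at time `t` with initial law `m`. -/
def heatFlow (d : ℕ) (t s : ℝ) (m : Measure (Ed d)) : Measure (Ed d) :=
  if s ≤ t then m
  else Measure.map (fun q : Ed d × Ed d => q.1 + q.2) (m.prod (gaussMeasure d (s - t)))

/-- The natural filtration of a measure-valued process, made right-continuous:
`𝓕^M_s = ⋂_{u > s} σ(M_r, r ∈ [t,u])`. -/
def genFiltration {Ω : Type} (d : ℕ) (M : ℝ → Ω → Measure (Ed d)) (t s : ℝ) :
    MeasurableSpace Ω :=
  ⨅ u ∈ Set.Ioi s, ⨆ r ∈ Set.Icc t u, MeasurableSpace.comap (M r) inferInstance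

/-- A path `[t,T] → (𝒫₁,d₁)` is càdlàg: right-continuous with left limits (for `d₁`). -/
def CadlagD1 (d : ℕ) (t T : ℝ) (g : ℝ → Measure (Ed d)) : Prop :=
  (∀ s ∈ Set.Ico t T, Tendsto (fun r => wdist d 1 (g r) (g s)) (𝓝[Set.Ici s] s) (𝓝 0)) ∧
  (∀ s ∈ Set.Ioc t T, ∃ μ : Measure (Ed d),
      Tendsto (fun r => wdist d 1 (g r) μ) (𝓝[Set.Ico t s] s) (𝓝 0))

/-- An element of `𝓜(t,m)` : a càdlàg `(𝒫₁,d₁)`-valued process `M = (M_s)_{s∈[t,T]}`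
on some probability space such that (i) `E[M_t(φ)] = m(φ)` for all bounded continuous `φ`
and (ii) `E[M_{t₂}(φ) | 𝓕^M_{t₁}] = p^{t₁,M_{t₁}}_{t₂}(φ)` for all `t ≤ t₁ ≤ t₂ ≤ T` and
all bounded continuous `φ`. -/
structure MVP (d : ℕ) (T t : ℝ) (m : Measure (Ed d)) where
  Ω : Type
  mΩ : MeasurableSpace Ω
  P : @Measure Ω mΩ
  probP : IsProbabilityMeasure P
  M : ℝ → Ω → Measure (Ed d)
  meas : ∀ s, @Measurable Ω (Measure (Ed d)) mΩ inferInstance (M s)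
  inP1 : ∀ s ∈ Set.Icc t T, ∀ ω, MemP d 1 (M s ω)
  cadlag : ∀ ω, CadlagD1 d t T (fun s => M s ω)
  init : ∀ φ : Ed d →ᵇ ℝ, ∫ ω, (∫ x, φ x ∂(M t ω)) ∂P = ∫ x, φ x ∂m
  cond : ∀ t₁ t₂ : ℝ, t ≤ t₁ → t₁ ≤ t₂ → t₂ ≤ T → ∀ φ : Ed d →ᵇ ℝ,
    P[(fun ω => ∫ x, φ x ∂(M t₂ ω)) | genFiltration d M t t₁]
      =ᵐ[P] fun ω => ∫ x, φ x ∂(heatFlow d t₁ t₂ (M t₁ ω))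

/-! Conditioning on `𝓕^M_t` and using the initial condition gives, for bounded continuous `φ`,
`E[M_{t'}(φ)] = E[M_t(φ ⋆ ρ_{t'-t})] = m(φ ⋆ ρ_{t'-t}) = p^{t,m}_{t'}(φ)`. Hence the mean measure
`E[M_{t'}] = P.bind M_{t'}` is `p^{t,m}_{t'}`, whose second moment is finite. Integrating against
it yields the identity for `φ` of quadratic growth, and Fubini for the kernel `ω ↦ M_{t'}(ω)` gives
`M_{t'}(|x|²) < ∞` almost surely. -/

section Gaussian

lemma integrable_exp_neg_mul_sq_norm {V : Type*} [NormedAddCommGroup V] [InnerProductSpace ℝ V]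
    [FiniteDimensional ℝ V] [MeasurableSpace V] [BorelSpace V] {b : ℝ} (hb : 0 < b) :
    Integrable fun v : V => Real.exp (-b * ‖v‖ ^ 2) :=
  Integrable.of_integral_ne_zero <| by
    rw [GaussianFourier.integral_rexp_neg_mul_sq_norm hb]
    positivity

lemma mul_exp_neg_two_mul_le {b : ℝ} (hb : 0 < b) (s : ℝ) :
    s * Real.exp (-(2 * b) * s) ≤ b⁻¹ * Real.exp (-b * s) := by
  have hbs : b * s ≤ Real.exp (b * s) := by linarith [Real.add_one_le_exp (b * s)]
  calc s * Real.exp (-(2 * b) * s) = b⁻¹ * (b * s) * Real.exp (-(2 * b) * s) := by field_simp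
    _ ≤ b⁻¹ * Real.exp (b * s) * Real.exp (-(2 * b) * s) := by gcongr
    _ = b⁻¹ * Real.exp (-b * s) := by rw [mul_assoc, ← Real.exp_add]; ring_nf

variable {d : ℕ} {δ : ℝ}

lemma gaussDensity_eq_mul_exp (x : Ed d) :
    gaussDensity d δ x =
      (2 * Real.pi * δ) ^ (-(d : ℝ) / 2) * Real.exp (-(2 * δ)⁻¹ * ‖x‖ ^ 2) := by
  rw [gaussDensity]
  ring_nf

lemma gaussDensity_nonneg (hδ : 0 < δ) (x : Ed d) : 0 ≤ gaussDensity d δ x := by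
  unfold gaussDensity
  positivity

@[fun_prop]
lemma measurable_gaussDensity : Measurable (gaussDensity d δ) := by
  unfold gaussDensity
  fun_prop

lemma integrable_gaussMeasure_iff (hδ : 0 < δ) {E : Type*} [NormedAddCommGroup E]
    [NormedSpace ℝ E] {g : Ed d → E} :
    Integrable g (gaussMeasure d δ) ↔ Integrable fun x => gaussDensity d δ x • g x := by
  rw [gaussMeasure, integrable_withDensity_iff_integrable_smul'
    measurable_gaussDensity.ennreal_ofReal (ae_of_all _ fun _ => ENNReal.ofReal_lt_top)]
  simp_rw [ENNReal.toReal_ofReal (gaussDensity_nonneg hδ _)]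

lemma isFiniteMeasure_gaussMeasure (hδ : 0 < δ) : IsFiniteMeasure (gaussMeasure d δ) := by
  have h : Integrable (fun _ : Ed d => (1 : ℝ)) (gaussMeasure d δ) := by
    rw [integrable_gaussMeasure_iff hδ]
    simp_rw [gaussDensity_eq_mul_exp, smul_eq_mul, mul_one]
    exact (integrable_exp_neg_mul_sq_norm (by positivity)).const_mul _
  exact (integrable_const_iff.1 h).resolve_left one_ne_zero

/-- The Gaussian factor `exp (-|x|²/(2δ))` absorbs `|x|²` at the price of halving the exponent. -/
lemma integrable_sq_norm_gaussMeasure (hδ : 0 < δ) :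
    Integrable (fun x : Ed d => ‖x‖ ^ 2) (gaussMeasure d δ) := by
  rw [integrable_gaussMeasure_iff hδ]
  set c := (2 * Real.pi * δ) ^ (-(d : ℝ) / 2)
  have hb : 0 < (4 * δ)⁻¹ := by positivity
  refine Integrable.mono' ((integrable_exp_neg_mul_sq_norm hb).const_mul (c * (4 * δ)⁻¹⁻¹))
    (by fun_prop) (ae_of_all _ fun x => ?_)
  have h := mul_exp_neg_two_mul_le hb (‖x‖ ^ 2)
  rw [show 2 * (4 * δ)⁻¹ = (2 * δ)⁻¹ by field_simp; ring] at h
  rw [smul_eq_mul, Real.norm_of_nonneg (by positivity [gaussDensity_nonneg hδ x]),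
    gaussDensity_eq_mul_exp, mul_assoc c, mul_assoc c]
  calc c * (Real.exp (-(2 * δ)⁻¹ * ‖x‖ ^ 2) * ‖x‖ ^ 2)
      = c * (‖x‖ ^ 2 * Real.exp (-(2 * δ)⁻¹ * ‖x‖ ^ 2)) := by ring
    _ ≤ c * ((4 * δ)⁻¹⁻¹ * Real.exp (-(4 * δ)⁻¹ * ‖x‖ ^ 2)) := by gcongr

end Gaussian

lemma norm_add_sq_le {E : Type*} [SeminormedAddCommGroup E] (a b : E) :
    ‖a + b‖ ^ 2 ≤ 2 * ‖a‖ ^ 2 + 2 * ‖b‖ ^ 2 := by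
  nlinarith [norm_add_le a b, norm_nonneg (a + b), sq_nonneg (‖a‖ - ‖b‖)]

lemma integrable_of_abs_le_mul_one_add_sq_norm {E : Type*} [NormedAddCommGroup E]
    [MeasurableSpace E] {μ : Measure E} [IsFiniteMeasure μ]
    (hμ : Integrable (fun x => ‖x‖ ^ 2) μ) {φ : E → ℝ} (hφ : AEStronglyMeasurable φ μ) {c : ℝ}
    (hc : ∀ x, |φ x| ≤ c * (1 + ‖x‖ ^ 2)) : Integrable φ μ :=
  Integrable.mono' (((integrable_const 1).add hμ).const_mul c) hφ (ae_of_all _ hc)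

namespace BoundedContinuousFunction

variable {E : Type*} [NormedAddCommGroup E] [MeasurableSpace E] [OpensMeasurableSpace E]

def translateAverage (γ : Measure E) [IsFiniteMeasure γ] (φ : E →ᵇ ℝ) : E →ᵇ ℝ :=
  ofNormedAddCommGroup (fun x => ∫ y, φ (x + y) ∂γ)
    (continuous_of_dominated (fun _ => (φ.continuous.comp (by fun_prop)).aestronglyMeasurable)
      (fun _ => ae_of_all _ fun _ => φ.norm_coe_le_norm _) (integrable_const ‖φ‖)
      (ae_of_all _ fun _ => φ.continuous.comp (by fun_prop)))
    (‖φ‖ * γ.real univ)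
    (fun _ => norm_integral_le_of_norm_le_const (ae_of_all _ fun _ => φ.norm_coe_le_norm _))

end BoundedContinuousFunction

section HeatFlow

variable {d : ℕ}

lemma isFiniteMeasure_heatFlow (t s : ℝ) (m : Measure (Ed d)) [IsFiniteMeasure m] :
    IsFiniteMeasure (heatFlow d t s m) := by
  unfold heatFlow
  split_ifs with hst
  · infer_instance
  · have := isFiniteMeasure_gaussMeasure (d := d) (sub_pos.2 (not_le.1 hst))
    infer_instance

lemma integral_heatFlow_of_lt {t s : ℝ} (hts : t < s) (m : Measure (Ed d)) [IsFiniteMeasure m]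
    (φ : Ed d →ᵇ ℝ) :
    ∫ x, φ x ∂(heatFlow d t s m) = ∫ x, ∫ y, φ (x + y) ∂(gaussMeasure d (s - t)) ∂m := by
  have := isFiniteMeasure_gaussMeasure (d := d) (sub_pos.2 hts)
  rw [heatFlow, if_neg (not_le.2 hts), integral_map (by fun_prop) (by fun_prop)]
  exact integral_prod _ ((φ.compContinuous ⟨_, continuous_add⟩).integrable _)

lemma integrable_sq_norm_heatFlow {m : Measure (Ed d)} [IsFiniteMeasure m]
    (hm : Integrable (fun x => ‖x‖ ^ 2) m) (t s : ℝ) :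
    Integrable (fun x => ‖x‖ ^ 2) (heatFlow d t s m) := by
  unfold heatFlow
  split_ifs with hst
  · exact hm
  have hδ : 0 < s - t := sub_pos.2 (not_le.1 hst)
  have := isFiniteMeasure_gaussMeasure (d := d) hδ
  rw [integrable_map_measure (by fun_prop) (by fun_prop)]
  refine Integrable.mono' (((hm.comp_fst _).const_mul 2).add
    (((integrable_sq_norm_gaussMeasure hδ).comp_snd m).const_mul 2)) (by fun_prop)
    (ae_of_all _ fun q => ?_)
  simpa using norm_add_sq_le q.1 q.2

end HeatFlow

namespace MeasureTheory.Measure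

open ProbabilityTheory

variable {Ω E : Type*} [MeasurableSpace Ω] [MeasurableSpace E] {P : Measure Ω}
  {K : Ω → Measure E}

lemma isProbabilityMeasure_bind [IsProbabilityMeasure P] (hK : Measurable K)
    (h : ∀ ω, IsProbabilityMeasure (K ω)) : IsProbabilityMeasure (P.bind K) := by
  constructor
  simp [bind_apply MeasurableSet.univ hK.aemeasurable]

variable {F : Type*} [NormedAddCommGroup F] {f : E → F}

lemma integral_bind [NormedSpace ℝ F] (hK : Measurable K) (hf : Integrable f (P.bind K)) :
    ∫ x, f x ∂(P.bind K) = ∫ ω, ∫ x, f x ∂(K ω) ∂P := by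
  have hP : P.bind K = ((⟨K, hK⟩ : Kernel Ω E) ∘ₖ Kernel.const Unit P) () :=
    comp_eq_comp_const_apply (κ := ⟨K, hK⟩)
  rw [hP] at hf ⊢
  exact Kernel.integral_comp hf

lemma ae_integrable_of_integrable_bind (hK : Measurable K) (hf : Integrable f (P.bind K)) :
    ∀ᵐ ω ∂P, Integrable f (K ω) :=
  ae_integrable_of_integrable_comp (κ := ⟨K, hK⟩) hf

end MeasureTheory.Measure

lemma genFiltration_le {Ω : Type} [mΩ : MeasurableSpace Ω] {d : ℕ}
    {M : ℝ → Ω → Measure (Ed d)} (hM : ∀ s, Measurable (M s)) (t s : ℝ) :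
    genFiltration d M t s ≤ mΩ :=
  (iInf₂_le (s + 1) (lt_add_one s)).trans (iSup₂_le fun r _ => (hM r).comap_le)

namespace MVP

variable {d : ℕ} {T t : ℝ} {m : Measure (Ed d)} (X : MVP d T t m)

lemma isProbabilityMeasure_M {s : ℝ} (hs : s ∈ Icc t T) (ω : X.Ω) :
    IsProbabilityMeasure (X.M s ω) :=
  (X.inP1 s hs ω).1

theorem integral_integral_eq_integral_heatFlow [IsFiniteMeasure m] {t' : ℝ} (ht' : t' ∈ Icc t T)
    (φ : Ed d →ᵇ ℝ) :
    ∫ ω, ∫ x, φ x ∂(X.M t' ω) ∂X.P = ∫ x, φ x ∂(heatFlow d t t' m) := by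
  let _ := X.mΩ
  have := X.probP
  rcases ht'.1.eq_or_lt with rfl | hlt
  · rw [heatFlow, if_pos le_rfl]
    exact X.init φ
  have := isFiniteMeasure_gaussMeasure (d := d) (sub_pos.2 hlt)
  have hMt (ω : X.Ω) := X.isProbabilityMeasure_M ⟨le_rfl, ht'.1.trans ht'.2⟩ ω
  calc ∫ ω, ∫ x, φ x ∂(X.M t' ω) ∂X.P
      = ∫ ω, (X.P[fun ω => ∫ x, φ x ∂(X.M t' ω) | genFiltration d X.M t t]) ω ∂X.P :=
        (integral_condExp (genFiltration_le X.meas t t)).symm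
    _ = ∫ ω, ∫ x, φ x ∂(heatFlow d t t' (X.M t ω)) ∂X.P :=
        integral_congr_ae (X.cond t t' le_rfl hlt.le ht'.2 φ)
    _ = ∫ ω, ∫ x, φ.translateAverage (gaussMeasure d (t' - t)) x ∂(X.M t ω) ∂X.P := by
        simp_rw [integral_heatFlow_of_lt hlt]
        rfl
    _ = ∫ x, φ.translateAverage (gaussMeasure d (t' - t)) x ∂m := X.init _
    _ = ∫ x, φ x ∂(heatFlow d t t' m) := (integral_heatFlow_of_lt hlt m φ).symm

theorem bind_eq_heatFlow [IsFiniteMeasure m] {t' : ℝ} (ht' : t' ∈ Icc t T) :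
    X.P.bind (X.M t') = heatFlow d t t' m := by
  let _ := X.mΩ
  have := X.probP
  have := Measure.isProbabilityMeasure_bind (P := X.P) (X.meas t') (X.isProbabilityMeasure_M ht')
  have := isFiniteMeasure_heatFlow t t' m
  refine ext_of_forall_integral_eq_of_IsFiniteMeasure fun φ => ?_
  rw [Measure.integral_bind (X.meas t') (φ.integrable _),
    X.integral_integral_eq_integral_heatFlow ht' φ]

end MVP

theorem mvp_mean_identity_general (d : ℕ) (T t : ℝ)
    (m : Measure (Ed d)) (hm : MemP d 2 m) (X : MVP d T t m) :
    ∀ t' ∈ Set.Icc t T,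
      (∀ φ : Ed d →ᵇ ℝ,
        ∫ ω, (∫ x, φ x ∂(X.M t' ω)) ∂X.P = ∫ x, φ x ∂(heatFlow d t t' m)) ∧
      (∀ φ : Ed d → ℝ, Measurable φ → (∃ c : ℝ, ∀ x, |φ x| ≤ c * (1 + ‖x‖ ^ 2)) →
        ∫ ω, (∫ x, φ x ∂(X.M t' ω)) ∂X.P = ∫ x, φ x ∂(heatFlow d t t' m)) ∧
      (∀ᵐ ω ∂X.P, MemP d 2 (X.M t' ω)) := by
  intro t' ht'
  let _ := X.mΩ
  have := hm.1
  have := isFiniteMeasure_heatFlow t t' m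
  have hbind := X.bind_eq_heatFlow ht'
  have hsq : Integrable (fun x => ‖x‖ ^ 2) (X.P.bind (X.M t')) :=
    hbind ▸ integrable_sq_norm_heatFlow (by simpa using hm.2) t t'
  refine ⟨X.integral_integral_eq_integral_heatFlow ht', fun φ hφ ⟨c, hc⟩ => ?_, ?_⟩
  · have hφi : Integrable φ (heatFlow d t t' m) :=
      integrable_of_abs_le_mul_one_add_sq_norm (hbind ▸ hsq) hφ.aestronglyMeasurable hc
    rw [← hbind] at hφi ⊢
    exact (Measure.integral_bind (X.meas t') hφi).symm
  · filter_upwards [Measure.ae_integrable_of_integrable_bind (X.meas t') hsq] with ω hω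
    exact ⟨X.isProbabilityMeasure_M ht' ω, by simpa using hω⟩

/-- Let `(t,m) ∈ [0,T] × 𝒫₂` and `M ∈ 𝓜(t,m)`. Then for every
`t' ∈ [t,T]` and every bounded continuous `φ`, `E[M_{t'}(φ)] = p^{t,m}_{t'}(φ)`; this
identity extends to all measurable `φ` with at most quadratic growth, and in particular
`M_{t'} ∈ 𝒫₂` almost surely. -/
theorem mvp_mean_identity (d : ℕ) (T t : ℝ) (ht : 0 ≤ t) (htT : t ≤ T)
    (m : Measure (Ed d)) (hm : MemP d 2 m) (X : MVP d T t m) :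
    ∀ t' ∈ Set.Icc t T,
      (∀ φ : Ed d →ᵇ ℝ,
        ∫ ω, (∫ x, φ x ∂(X.M t' ω)) ∂X.P = ∫ x, φ x ∂(heatFlow d t t' m)) ∧
      (∀ φ : Ed d → ℝ, Measurable φ → (∃ c : ℝ, ∀ x, |φ x| ≤ c * (1 + ‖x‖ ^ 2)) →
        ∫ ω, (∫ x, φ x ∂(X.M t' ω)) ∂X.P = ∫ x, φ x ∂(heatFlow d t t' m)) ∧
      (∀ᵐ ω ∂X.P, MemP d 2 (X.M t' ω)) :=
  mvp_mean_identity_general d T t m hm X
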